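/- For the Cover–Kim sensing example with binary X, X₁, independent binary states S, N, Y₁ = SX + X (real sum), Y_r = X₁ ⊕ N, Y_d = S·X, S_d = S, and Hamming distortion: setting a = P(X=1), b = P(X₁=1), the capacity-distortion function equals C(D) = max over a,b ∈ [0,1] with (1−a)·min(P_S, 1−P_S) ≤ D of min{ H₂(a), H₂(b * P_N) − H₂(P_N) + H₂(a P_S) − a H₂(P_S) }, where * is binary convolution. -/

import Mathlib

open Finset
open scoped Classical

namespace ISAC

variable {Ω : Type*} [Fintype Ω]

/-- `p` is a probability mass function on the finite sample space `Ω`. -/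
def IsPMF (p : Ω → ℝ) : Prop := (∀ ω, 0 ≤ p ω) ∧ ∑ ω, p ω = 1

/-- Probability that the random variable `X` takes the value `x`. -/
noncomputable def pr (p : Ω → ℝ) {α : Type*} (X : Ω → α) (x : α) : ℝ :=
  ∑ ω, if X ω = x then p ω else 0

/-- Shannon entropy (in bits) of the random variable `X`. -/
noncomputable def ent (p : Ω → ℝ) {α : Type*} [Fintype α] (X : Ω → α) : ℝ :=
  -∑ x, pr p X x * Real.logb 2 (pr p X x)

/-- Conditional entropy `H(X | Z)`. -/
noncomputable def condEnt (p : Ω → ℝ) {α β : Type*} [Fintype α] [Fintype β] (X : Ω → α) (Z : Ω → β) : ℝ :=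
  ent p (fun ω => (X ω, Z ω)) - ent p Z

/-- Mutual information `I(X;Y)`. -/
noncomputable def mi (p : Ω → ℝ) {α β : Type*} [Fintype α] [Fintype β] (X : Ω → α) (Y : Ω → β) : ℝ :=
  ent p X + ent p Y - ent p (fun ω => (X ω, Y ω))

/-- Conditional mutual information `I(X;Y|Z)`. -/
noncomputable def cmi (p : Ω → ℝ) {α β γ : Type*} [Fintype α] [Fintype β] [Fintype γ] (X : Ω → α) (Y : Ω → β) (Z : Ω → γ) : ℝ :=
  ent p (fun ω => (X ω, Z ω)) + ent p (fun ω => (Y ω, Z ω))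
    - ent p (fun ω => (X ω, Y ω, Z ω)) - ent p Z

/-- The Markov chain `A − B − C`: `A` and `C` are conditionally independent given `B`. -/
def Markov (p : Ω → ℝ) {α β γ : Type*} (A : Ω → α) (B : Ω → β) (C : Ω → γ) : Prop :=
  ∀ a b c, pr p (fun ω => (A ω, B ω, C ω)) (a, b, c) * pr p B b
    = pr p (fun ω => (A ω, B ω)) (a, b) * pr p (fun ω => (B ω, C ω)) (b, c)

/-- Independence of the random variables `A` and `B`. -/
def IndepRV (p : Ω → ℝ) {α β : Type*} (A : Ω → α) (B : Ω → β) : Prop :=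
  ∀ a b, pr p (fun ω => (A ω, B ω)) (a, b) = pr p A a * pr p B b

/-- Expectation of a real-valued function of the outcome. -/
noncomputable def expect (p : Ω → ℝ) (f : Ω → ℝ) : ℝ := ∑ ω, p ω * f ω

end ISAC

open ISAC

/-- The binary entropy function `H₂(t)`. -/
noncomputable def H2 (t : ℝ) : ℝ := -(t * Real.logb 2 t) - (1 - t) * Real.logb 2 (1 - t)

/-- The binary convolution `p * q = p(1−q) + (1−p)q`. -/
def bconv (p q : ℝ) : ℝ := p * (1 - q) + (1 - p) * q

/-- Sample space `(X, X₁, S, N)` for the Cover–Kim sensing example. -/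
abbrev CKOmega := Bool × Bool × Bool × Bool

/-- Bernoulli mass function with parameter `t`. -/
noncomputable def bern (t : ℝ) : Bool → ℝ := fun b => if b then t else 1 - t

/-- The product distribution of independent `X ~ Bern(a)`, `X₁ ~ Bern(b)`, `S ~ Bern(ps)`,
`N ~ Bern(pn)`. -/
noncomputable def pCK (a b ps pn : ℝ) : CKOmega → ℝ :=
  fun ω => bern a ω.1 * bern b ω.2.1 * bern ps ω.2.2.1 * bern pn ω.2.2.2

def Xck (ω : CKOmega) : Bool := ω.1
def X1ck (ω : CKOmega) : Bool := ω.2.1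
def Sck (ω : CKOmega) : Bool := ω.2.2.1
def Nck (ω : CKOmega) : Bool := ω.2.2.2

/-- `Y₁ = S·X + X` as a real sum, taking values in `{0,1,2}`. -/
def Y1ck (ω : CKOmega) : Fin 3 := if ω.1 then (if ω.2.2.1 then 2 else 1) else 0

/-- `Y_d = S·X`. -/
def Ydck (ω : CKOmega) : Bool := ω.1 && ω.2.2.1

/-- `Y_r = X₁ ⊕ N`. -/
def Yrck (ω : CKOmega) : Bool := Bool.xor ω.2.1 ω.2.2.2

/-- Expected Hamming distortion of the optimal estimator `Ŝ_d(x, y_d)` based on `(X, Y_d)`. -/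
noncomputable def distCK (p : CKOmega → ℝ) : ℝ :=
  ∑ x : Bool, ∑ yd : Bool,
    Finset.univ.inf' Finset.univ_nonempty
      (fun s' : Bool => ∑ s : Bool,
        pr p (fun ω => (Sck ω, Xck ω, Ydck ω)) (s, x, yd) * (if Bool.xor s s' then 1 else 0))

/-!
Under the product distribution `pCK a b ps pn` each information quantity is explicit.
Both `(Y₁, Y_d)` and `(X, Y₁, Y_d)` are injective images of `(X, Y_d)`, so
`I(X; Y₁Y_d) = H(X) = H₂(a)`. `(X₁, Y_r)` is an injective image of the independent pair
`(X₁, N)`, so `I(X₁; Y_r) = H₂(b * P_N) − H₂(P_N)`; and `H(X, Y_d) = H₂(a) + a H₂(P_S)` gives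
`I(X; Y_d)`. The optimal estimate of `S` is exact when `X = 1` and errs with probability
`min(P_S, 1 − P_S)` when `X = 0`. So the two sets whose suprema are compared coincide.
-/

open Function

lemma mul_logb_mul (c x y : ℝ) :
    (x * y) * Real.logb c (x * y) = (x * y) * Real.logb c x + (x * y) * Real.logb c y := by
  rcases eq_or_ne x 0 with rfl | hx; · simp
  rcases eq_or_ne y 0 with rfl | hy; · simp
  rw [Real.logb_mul hx hy, mul_add]

namespace ISAC

variable {Ω α β : Type*} [Fintype Ω] (p : Ω → ℝ)

lemma sum_pr [Fintype α] (X : Ω → α) : ∑ x, pr p X x = ∑ ω, p ω := by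
  simp only [pr]
  rw [Finset.sum_comm]
  simp

lemma pr_comp_apply {g : α → β} (hg : Injective g) (X : Ω → α) (x : α) :
    pr p (g ∘ X) (g x) = pr p X x := by
  simp only [pr, comp_apply, hg.eq_iff]

lemma pr_comp_of_notMem_range {g : α → β} (X : Ω → α) {y : β} (hy : y ∉ Set.range g) :
    pr p (g ∘ X) y = 0 :=
  Finset.sum_eq_zero fun ω _ => if_neg fun h => hy ⟨X ω, h⟩

lemma ent_comp_of_injective [Fintype α] [Fintype β] {g : α → β} (hg : Injective g)
    (X : Ω → α) : ent p (g ∘ X) = ent p X := by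
  rw [ent, ent, Fintype.sum_of_injective g hg (fun x => pr p X x * Real.logb 2 (pr p X x))
    (fun y => pr p (g ∘ X) y * Real.logb 2 (pr p (g ∘ X) y)) _
    fun x => by rw [pr_comp_apply p hg]]
  intro y hy
  rw [pr_comp_of_notMem_range p X hy, zero_mul]

lemma ent_pair_of_indepRV [Fintype α] [Fintype β] {A : Ω → α} {B : Ω → β}
    (hAB : IndepRV p A B) (hp : ∑ ω, p ω = 1) :
    ent p (fun ω => (A ω, B ω)) = ent p A + ent p B := by
  have hA : ∑ a, pr p A a = 1 := (sum_pr p A).trans hp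
  have hB : ∑ b, pr p B b = 1 := (sum_pr p B).trans hp
  rw [ent, Fintype.sum_prod_type]
  simp only [hAB _ _, mul_logb_mul, Finset.sum_add_distrib]
  have hA' (a : α) : ∑ b, pr p A a * pr p B b * Real.logb 2 (pr p A a)
      = pr p A a * Real.logb 2 (pr p A a) := by
    rw [← Finset.sum_mul, ← Finset.mul_sum, hB, mul_one]
  have hB' (b : β) : ∑ a, pr p A a * pr p B b * Real.logb 2 (pr p B b)
      = pr p B b * Real.logb 2 (pr p B b) := by
    rw [← Finset.sum_mul, ← Finset.sum_mul, hA, one_mul]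
  simp only [hA']
  rw [Finset.sum_comm]
  simp only [hB', ent]
  ring

end ISAC

lemma ent_eq_H2 {Ω : Type*} [Fintype Ω] {p : Ω → ℝ} {X : Ω → Bool} {t : ℝ}
    (h1 : pr p X true = t) (h0 : pr p X false = 1 - t) : ent p X = H2 t := by
  simp only [ent, Fintype.sum_bool, h1, h0, H2]
  ring

lemma inf'_univ_bool {γ : Type*} [SemilatticeInf γ] (f : Bool → γ) :
    Finset.univ.inf' Finset.univ_nonempty f = f true ⊓ f false := by
  simp [Fintype.univ_bool]

section CoverKim

variable (a b ps pn : ℝ)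

lemma sum_pCK : ∑ ω, pCK a b ps pn ω = 1 := by
  simp +decide only [pCK, bern, Fintype.sum_prod_type, Fintype.sum_bool, ↓reduceIte]
  ring

lemma pr_pCK_Xck (x : Bool) : pr (pCK a b ps pn) Xck x = bern a x := by
  cases x <;>
    simp +decide only [pr, pCK, bern, Xck, Fintype.sum_prod_type, Fintype.sum_bool, ↓reduceIte] <;>
    ring

lemma pr_pCK_X1ck (x : Bool) : pr (pCK a b ps pn) X1ck x = bern b x := by
  cases x <;>
    simp +decide only [pr, pCK, bern, X1ck, Fintype.sum_prod_type, Fintype.sum_bool, ↓reduceIte] <;>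
    ring

lemma pr_pCK_Nck (n : Bool) : pr (pCK a b ps pn) Nck n = bern pn n := by
  cases n <;>
    simp +decide only [pr, pCK, bern, Nck, Fintype.sum_prod_type, Fintype.sum_bool, ↓reduceIte] <;>
    ring

lemma indepRV_X1ck_Nck : IndepRV (pCK a b ps pn) X1ck Nck := by
  intro x n
  rw [pr_pCK_X1ck, pr_pCK_Nck]
  cases x <;> cases n <;>
    simp +decide only [pr, pCK, bern, X1ck, Nck, Fintype.sum_prod_type, Fintype.sum_bool,
      ↓reduceIte] <;>
    ring

lemma pr_pCK_Ydck_true : pr (pCK a b ps pn) Ydck true = a * ps := by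
  simp +decide only [pr, pCK, bern, Ydck, Fintype.sum_prod_type, Fintype.sum_bool, ↓reduceIte]
  ring

lemma pr_pCK_Ydck_false : pr (pCK a b ps pn) Ydck false = 1 - a * ps := by
  simp +decide only [pr, pCK, bern, Ydck, Fintype.sum_prod_type, Fintype.sum_bool, ↓reduceIte]
  ring

lemma pr_pCK_Yrck_true : pr (pCK a b ps pn) Yrck true = bconv b pn := by
  simp +decide only [pr, pCK, bern, Yrck, bconv, Fintype.sum_prod_type, Fintype.sum_bool,
    ↓reduceIte]
  ring

lemma pr_pCK_Yrck_false : pr (pCK a b ps pn) Yrck false = 1 - bconv b pn := by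
  simp +decide only [pr, pCK, bern, Yrck, bconv, Fintype.sum_prod_type, Fintype.sum_bool,
    ↓reduceIte]
  ring

lemma pr_pCK_Sck_Xck_Ydck (s x yd : Bool) :
    pr (pCK a b ps pn) (fun ω => (Sck ω, Xck ω, Ydck ω)) (s, x, yd)
      = if yd = (x && s) then bern a x * bern ps s else 0 := by
  cases s <;> cases x <;> cases yd <;>
    simp +decide only [pr, pCK, bern, Sck, Xck, Ydck, Fintype.sum_prod_type, Fintype.sum_bool,
      ↓reduceIte] <;>
    ring

lemma pr_pCK_Xck_Ydck (x yd : Bool) :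
    pr (pCK a b ps pn) (fun ω => (Xck ω, Ydck ω)) (x, yd)
      = if x then a * bern ps yd else if yd then 0 else 1 - a := by
  cases x <;> cases yd <;>
    simp +decide only [pr, pCK, bern, Xck, Ydck, Fintype.sum_prod_type, Fintype.sum_bool,
      ↓reduceIte] <;>
    ring

lemma ent_pCK_Xck : ent (pCK a b ps pn) Xck = H2 a :=
  ent_eq_H2 (pr_pCK_Xck a b ps pn true) (pr_pCK_Xck a b ps pn false)

lemma ent_pCK_X1ck : ent (pCK a b ps pn) X1ck = H2 b :=
  ent_eq_H2 (pr_pCK_X1ck a b ps pn true) (pr_pCK_X1ck a b ps pn false)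

lemma ent_pCK_Nck : ent (pCK a b ps pn) Nck = H2 pn :=
  ent_eq_H2 (pr_pCK_Nck a b ps pn true) (pr_pCK_Nck a b ps pn false)

lemma ent_pCK_Ydck : ent (pCK a b ps pn) Ydck = H2 (a * ps) :=
  ent_eq_H2 (pr_pCK_Ydck_true a b ps pn) (pr_pCK_Ydck_false a b ps pn)

lemma ent_pCK_Yrck : ent (pCK a b ps pn) Yrck = H2 (bconv b pn) :=
  ent_eq_H2 (pr_pCK_Yrck_true a b ps pn) (pr_pCK_Yrck_false a b ps pn)

lemma ent_pCK_Xck_Ydck :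
    ent (pCK a b ps pn) (fun ω => (Xck ω, Ydck ω)) = H2 a + a * H2 ps := by
  have h1 := mul_logb_mul 2 a ps
  have h0 := mul_logb_mul 2 a (1 - ps)
  simp only [ent, Fintype.sum_prod_type, Fintype.sum_bool, pr_pCK_Xck_Ydck, bern, H2,
    Bool.false_eq_true, if_true, if_false, zero_mul, zero_add]
  linear_combination -h1 - h0

lemma mi_pCK_Xck_Ydck : mi (pCK a b ps pn) Xck Ydck = H2 (a * ps) - a * H2 ps := by
  rw [mi, ent_pCK_Xck, ent_pCK_Ydck, ent_pCK_Xck_Ydck]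
  ring

lemma mi_pCK_X1ck_Yrck : mi (pCK a b ps pn) X1ck Yrck = H2 (bconv b pn) - H2 pn := by
  have hg : Injective fun v : Bool × Bool => (v.1, Bool.xor v.1 v.2) := by decide
  have hpair : (fun ω => (X1ck ω, Yrck ω))
      = (fun v : Bool × Bool => (v.1, Bool.xor v.1 v.2)) ∘ fun ω => (X1ck ω, Nck ω) := rfl
  rw [mi, hpair, ent_comp_of_injective _ hg,
    ent_pair_of_indepRV _ (indepRV_X1ck_Nck a b ps pn) (sum_pCK a b ps pn),
    ent_pCK_X1ck, ent_pCK_Nck, ent_pCK_Yrck]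
  ring

lemma mi_pCK_Xck_Y1ck_Ydck : mi (pCK a b ps pn) Xck (fun ω => (Y1ck ω, Ydck ω)) = H2 a := by
  set g : Bool × Bool → Fin 3 × Bool :=
    fun v => (if v.1 then (if v.2 then 2 else 1) else 0, v.2)
  have hg : Injective g := by decide
  have hg' : Injective fun v => (v.1, g v) := fun v w h => hg (congrArg Prod.snd h)
  have hY : (fun ω => (Y1ck ω, Ydck ω)) = g ∘ fun ω => (Xck ω, Ydck ω) := by
    funext ⟨x, _, s, _⟩
    cases x <;> cases s <;> rfl
  have hXY : (fun ω => (Xck ω, Y1ck ω, Ydck ω))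
      = (fun v => (v.1, g v)) ∘ fun ω => (Xck ω, Ydck ω) := by
    funext ⟨x, _, s, _⟩
    cases x <;> cases s <;> rfl
  simp only [mi]
  rw [hXY, hY, ent_comp_of_injective _ hg, ent_comp_of_injective _ hg', ent_pCK_Xck]
  ring

end CoverKim

lemma distCK_pCK {a ps : ℝ} (b pn : ℝ) (ha : a ∈ Set.Icc (0 : ℝ) 1)
    (hps : ps ∈ Set.Icc (0 : ℝ) 1) :
    distCK (pCK a b ps pn) = (1 - a) * min ps (1 - ps) := by
  simp only [distCK, inf'_univ_bool, Fintype.sum_bool, pr_pCK_Sck_Xck_Ydck, bern,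
    Bool.xor_self, Bool.xor_true, Bool.xor_false, Bool.not_false, Bool.false_eq_true,
    Bool.true_eq_false, Bool.and_true, Bool.and_false, if_true, if_false,
    mul_zero, mul_one, zero_add, add_zero]
  rw [min_eq_left (mul_nonneg ha.1 hps.1), min_eq_right (mul_nonneg ha.1 (sub_nonneg.2 hps.2)),
    min_self, min_comm ps, mul_min_of_nonneg _ _ (sub_nonneg.2 ha.2)]
  ring

theorem stmt_17_general (ps pn D : ℝ) (hps : ps ∈ Set.Icc (0 : ℝ) 1) :
    sSup {r : ℝ | ∃ a b : ℝ, a ∈ Set.Icc (0 : ℝ) 1 ∧ b ∈ Set.Icc (0 : ℝ) 1 ∧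
        distCK (pCK a b ps pn) ≤ D ∧
        r = min (mi (pCK a b ps pn) Xck (fun ω => (Y1ck ω, Ydck ω)))
            (mi (pCK a b ps pn) X1ck Yrck + mi (pCK a b ps pn) Xck Ydck)}
      = sSup {r : ℝ | ∃ a b : ℝ, a ∈ Set.Icc (0 : ℝ) 1 ∧ b ∈ Set.Icc (0 : ℝ) 1 ∧
        (1 - a) * min ps (1 - ps) ≤ D ∧
        r = min (H2 a) (H2 (bconv b pn) - H2 pn + H2 (a * ps) - a * H2 ps)} := by
  congr 1
  ext r
  refine exists₂_congr fun a b => and_congr_right fun ha => and_congr_right fun _ => ?_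
  rw [distCK_pCK b pn ha hps, mi_pCK_Xck_Y1ck_Ydck, mi_pCK_X1ck_Yrck, mi_pCK_Xck_Ydck,
    add_sub_assoc']

/-- **Capacity–distortion function of the Cover–Kim sensing example.**
With `a = P(X=1)`, `b = P(X₁=1)`, the capacity-distortion function
`C(D) = max_{P_X P_{X₁} ∈ 𝒫_D} min{ I(X;Y₁Y_d), I(X₁;Y_r) + I(X;Y_d) }`
equals `max` over `a, b ∈ [0,1]` with `(1−a)·min(P_S, 1−P_S) ≤ D` of
`min{ H₂(a), H₂(b*P_N) − H₂(P_N) + H₂(aP_S) − aH₂(P_S) }`. -/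
theorem stmt_17 (ps pn D : ℝ) (hps : ps ∈ Set.Icc (0 : ℝ) 1) (hpn : pn ∈ Set.Icc (0 : ℝ) 1) :
    sSup {r : ℝ | ∃ a b : ℝ, a ∈ Set.Icc (0 : ℝ) 1 ∧ b ∈ Set.Icc (0 : ℝ) 1 ∧
        distCK (pCK a b ps pn) ≤ D ∧
        r = min (mi (pCK a b ps pn) Xck (fun ω => (Y1ck ω, Ydck ω)))
            (mi (pCK a b ps pn) X1ck Yrck + mi (pCK a b ps pn) Xck Ydck)}
      = sSup {r : ℝ | ∃ a b : ℝ, a ∈ Set.Icc (0 : ℝ) 1 ∧ b ∈ Set.Icc (0 : ℝ) 1 ∧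
        (1 - a) * min ps (1 - ps) ≤ D ∧
        r = min (H2 a) (H2 (bconv b pn) - H2 pn + H2 (a * ps) - a * H2 ps)} :=
  stmt_17_general ps pn D hps
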